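/- Let 𝒴 ⊆ ℂⁿ be a p-dimensional subspace whose smallest Ritz value η_p of A in 𝒴 satisfies η_p > λ_{p+1}, let i ∈ {1, …, p}, and set 𝒴̃ = span{x_{i+1}, …, x_p}^⊥ ∩ 𝒴 (which is then i-dimensional). Let f : ℝ → ℝ satisfy |f(λ₁)| ≥ ⋯ ≥ |f(λ_i)| > ν_p where ν_p = max_{j ∈ {p+1, …, n}} |f(λⱼ)|. Let η̃_i and η̃'_i be the smallest (i-th largest) Ritz values of A in 𝒴̃ and in 𝒴̃' = f(A)𝒴̃ respectively, let ỹ ∈ 𝒴̃ be a nonzero vector such that ỹ' = f(A)ỹ is a Ritz vector of A in 𝒴̃' associated with η̃'_i (i.e., ỹ' ≠ 0, ρ(ỹ') = η̃'_i, and Aỹ' − η̃'_i ỹ' ⊥ 𝒴̃'), and assume λ_i > η̃'_i. Define ỹ_i = Σ_{j=1}^{i} xⱼ(xⱼᴴỹ) and ỹ° = f(λ_i) ỹ_i + ν_p (ỹ − ỹ_i). Then λ_i > η̃'_i = ρ(ỹ') ≥ ρ(ỹ°) ≥ ρ(ỹ) ≥ η̃_i > λ_{p+1}, and moreover (ρ(ỹ_i)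 − ρ(ỹ°))/(ρ(ỹ°) − ρ(ỹ − ỹ_i)) = (ν_p²/|f(λ_i)|²) · (ρ(ỹ_i) − ρ(ỹ))/(ρ(ỹ) − ρ(ỹ − ỹ_i)). -/

import Mathlib

/-!
In the eigenbasis every Rayleigh quotient in the statement is a weighted mean of the `λⱼ`, with
weights `|xⱼᴴỹ|²` times the square of the factor by which the vector scales the `j`-th coefficient
of `ỹ`. Membership in `𝒴̃` kills the weights with `i < j ≤ p`, and since `η_p > λ_{p+1}` no nonzero
vector of `𝒴` lives on `x_{p+1}, …, x_n`; hence `dim 𝒴̃ = i` and `ỹ_i ≠ 0`. Passing from `ỹ`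
to `ỹ°` and then to `f(A)ỹ` moves weight towards larger eigenvalues: a weighted Chebyshev
inequality covers the reweightings whose ratio is monotone in `λ`, and the remaining step only
lowers weights at eigenvalues `≤ λ_{p+1}`, which lie below the current mean. The ratio identity
is the lever rule for a mixture of the head `ỹ_i` and the tail `ỹ - ỹ_i`: the ratio equals the
tail-to-head mass ratio, which `ỹ°` rescales by `ν_p² / f(λ_i)²`.
-/

/-- The Rayleigh quotient `ρ(v) = (vᴴAv)/(vᴴv)` of the Hermitian matrix `A`. -/
noncomputable def rayleigh {n : ℕ} (A : Matrix (Fin n) (Fin n) ℂ)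
    (v : EuclideanSpace ℂ (Fin n)) : ℝ :=
  ((inner ℂ v (Matrix.toEuclideanLin A v) : ℂ)).re / ‖v‖ ^ 2

/-- The `i`-th largest Ritz value (1-indexed, `i ∈ {1, …, dim S}`) of the Hermitian
matrix `A` in the subspace `S`, characterized via the Courant–Fischer max-min
principle applied inside `S` (equivalently, the `i`-th largest eigenvalue of
`SᴴAS` for any orthonormal basis matrix `S`). -/
noncomputable def ritzValue {n : ℕ} (A : Matrix (Fin n) (Fin n) ℂ)
    (S : Submodule ℂ (EuclideanSpace ℂ (Fin n))) (i : ℕ) : ℝ :=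
  sSup {r : ℝ | ∃ T : Submodule ℂ (EuclideanSpace ℂ (Fin n)), T ≤ S ∧
    Module.finrank ℂ T = i ∧ ∀ v ∈ T, v ≠ 0 → r ≤ rayleigh A v}

/-- `f(A) = ∑ j, f(λ_j) x_j x_jᴴ` as a linear operator, for eigenvalues `lam`
and orthonormal eigenvectors `x` of `A`. -/
noncomputable def matFun {n : ℕ} (lam : Fin n → ℝ)
    (x : Fin n → EuclideanSpace ℂ (Fin n)) (f : ℝ → ℝ) :
    EuclideanSpace ℂ (Fin n) →ₗ[ℂ] EuclideanSpace ℂ (Fin n) :=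
  ∑ j : Fin n, (f (lam j) : ℂ) • ((innerSL ℂ (x j)).toLinearMap.smulRight (x j))

/-- `y` is a Ritz vector of `A` in `S` associated with the Ritz value `η`:
`y ∈ S`, `y ≠ 0`, `ρ(y) = η` and `Ay − ηy ⊥ S`. -/
def IsRitzVector {n : ℕ} (A : Matrix (Fin n) (Fin n) ℂ)
    (S : Submodule ℂ (EuclideanSpace ℂ (Fin n))) (η : ℝ)
    (y : EuclideanSpace ℂ (Fin n)) : Prop :=
  y ∈ S ∧ y ≠ 0 ∧ rayleigh A y = η ∧
    ∀ v ∈ S, (inner ℂ v (Matrix.toEuclideanLin A y - (η : ℂ) • y) : ℂ) = 0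

open Finset

theorem mixture_ratio_eq {P Q W U a b : ℝ} (hW : 0 < W) (hU : 0 ≤ U) (hQ : U = 0 → Q = 0)
    (ha : 0 < a) (hb : 0 ≤ b) :
    (P / W - (a * P + b * Q) / (a * W + b * U)) / ((a * P + b * Q) / (a * W + b * U) - Q / U) =
      b / a * ((P / W - (P + Q) / (W + U)) / ((P + Q) / (W + U) - Q / U)) := by
  rcases hU.eq_or_lt with rfl | hU
  · simp [hQ rfl, mul_div_mul_left _ _ ha.ne']
  -- The last factor is `1`, or `0` when the two group means `P / W` and `Q / U` coincide.
  have hsplit : ∀ a b : ℝ, 0 < a * W + b * U →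
      (P / W - (a * P + b * Q) / (a * W + b * U)) / ((a * P + b * Q) / (a * W + b * U) - Q / U) =
        b * U / (a * W) * ((P * U - Q * W) / (P * U - Q * W)) := by
    intro a b hD
    rw [div_sub_div _ _ hW.ne' hD.ne', div_sub_div _ _ hD.ne' hU.ne']
    field_simp
    ring
  have h11 := hsplit 1 1 (by positivity)
  simp only [one_mul] at h11
  rw [hsplit a b (by positivity), h11]
  ring

section WeightedMean

variable {ι : Type*} [Fintype ι]

noncomputable def weightedMean (l u : ι → ℝ) : ℝ := (∑ j, l j * u j) / ∑ j, u j

theorem weightedMean_le_of_forall_le {l u : ι → ℝ} {c : ℝ} (hu : ∀ j, 0 ≤ u j)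
    (hpos : 0 < ∑ j, u j) (h : ∀ j, u j ≠ 0 → l j ≤ c) : weightedMean l u ≤ c := by
  rw [weightedMean, div_le_iff₀ hpos, mul_sum]
  refine sum_le_sum fun j _ => ?_
  rcases eq_or_ne (u j) 0 with h0 | h0
  · simp [h0]
  · exact mul_le_mul_of_nonneg_right (h j h0) (hu j)

theorem weightedMean_le_weightedMean_of_ratio_monovary {l u v : ι → ℝ}
    (h : ∀ j k, l j < l k → v j * u k ≤ v k * u j)
    (hu : 0 < ∑ j, u j) (hv : 0 < ∑ j, v j) : weightedMean l u ≤ weightedMean l v := by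
  rw [weightedMean, weightedMean, div_le_div_iff₀ hu hv]
  have hS : ∑ j, ∑ k, (l j * v j * u k - l j * u j * v k) =
      (∑ j, l j * v j) * ∑ j, u j - (∑ j, l j * u j) * ∑ j, v j := by
    simp only [sum_sub_distrib, ← mul_sum, ← sum_mul]
  have key : ∑ j, ∑ k, (l j - l k) * (v j * u k - v k * u j) =
      2 * ((∑ j, l j * v j) * ∑ j, u j - (∑ j, l j * u j) * ∑ j, v j) := by
    rw [← hS, two_mul]
    nth_rewrite 2 [sum_comm]
    rw [← sum_add_distrib]
    refine sum_congr rfl fun j _ => ?_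
    rw [← sum_add_distrib]
    exact sum_congr rfl fun k _ => by ring
  have hnonneg : 0 ≤ ∑ j, ∑ k, (l j - l k) * (v j * u k - v k * u j) := by
    refine sum_nonneg fun j _ => sum_nonneg fun k _ => ?_
    rcases lt_trichotomy (l j) (l k) with hjk | hjk | hjk
    · nlinarith [h j k hjk]
    · simp [hjk]
    · nlinarith [h k j hjk]
  linarith

theorem weightedMean_le_weightedMean_of_decrease_below {l u w : ι → ℝ} {c : ℝ}
    (huw : ∀ j, u j ≤ w j) (hc : ∀ j, u j < w j → l j ≤ c) (hcw : c ≤ weightedMean l w)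
    (hu : 0 < ∑ j, u j) : weightedMean l w ≤ weightedMean l u := by
  have hd : ∀ j, 0 ≤ w j - u j := fun j => sub_nonneg.mpr (huw j)
  have hw : 0 < ∑ j, w j := hu.trans_le (sum_le_sum fun j _ => huw j)
  have hld : ∑ j, l j * (w j - u j) ≤ c * ∑ j, (w j - u j) := by
    rw [mul_sum]
    refine sum_le_sum fun j _ => ?_
    rcases (huw j).lt_or_eq with hlt | heq
    · exact mul_le_mul_of_nonneg_right (hc j hlt) (hd j)
    · simp [heq]
  have hcw' : c * ∑ j, w j ≤ ∑ j, l j * w j := (le_div_iff₀ hw).mp hcw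
  have hD : 0 ≤ ∑ j, (w j - u j) := sum_nonneg fun j _ => hd j
  simp only [mul_sub, sum_sub_distrib] at hld hD
  rw [weightedMean, weightedMean, div_le_div_iff₀ hw hu]
  nlinarith [mul_le_mul_of_nonneg_right hld hw.le, mul_le_mul_of_nonneg_right hcw' hD]

theorem weightedMean_ite_mul (q : ι → Prop) [DecidablePred q] (l u : ι → ℝ) (a b : ℝ) :
    weightedMean l (fun j => (if q j then a else b) * u j) =
      (a * ∑ j ∈ univ.filter q, l j * u j + b * ∑ j ∈ univ.filter (¬ q ·), l j * u j) /
        (a * ∑ j ∈ univ.filter q, u j + b * ∑ j ∈ univ.filter (¬ q ·), u j) := by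
  simp only [weightedMean, ite_mul, mul_ite, sum_ite, mul_sum, mul_left_comm (l _)]

theorem weightedMean_ite_ratio_eq (q : ι → Prop) [DecidablePred q] (l : ι → ℝ)
    {w : ι → ℝ} (hw : ∀ j, 0 ≤ w j) (hhead : ∃ j, q j ∧ 0 < w j) {a b : ℝ} (ha : 0 < a)
    (hb : 0 ≤ b) :
    (weightedMean l (fun j => (if q j then 1 else 0) * w j) -
        weightedMean l (fun j => (if q j then a else b) * w j)) /
      (weightedMean l (fun j => (if q j then a else b) * w j) -
        weightedMean l (fun j => (if q j then 0 else 1) * w j)) =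
    b / a * ((weightedMean l (fun j => (if q j then 1 else 0) * w j) - weightedMean l w) /
      (weightedMean l w - weightedMean l (fun j => (if q j then 0 else 1) * w j))) := by
  have hw' : weightedMean l w = weightedMean l (fun j => (if q j then 1 else 1) * w j) := by simp
  rw [hw']
  simp only [weightedMean_ite_mul, one_mul, zero_mul, zero_add, add_zero]
  obtain ⟨j₀, hj₀, hw₀⟩ := hhead
  refine mixture_ratio_eq (sum_pos' (fun j _ => hw j) ⟨j₀, by simpa using hj₀, hw₀⟩)
    (sum_nonneg fun j _ => hw j) (fun hU => sum_eq_zero fun j hj => ?_) ha hb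
  rw [(sum_eq_zero_iff_of_nonneg fun j _ => hw j).mp hU j hj, mul_zero]

end WeightedMean

section HeadTail

variable {n i : ℕ} {l w : Fin n → ℝ}

theorem weightedMean_le_weightedMean_ite_mul (hl : Antitone l) (hw : ∀ j, 0 ≤ w j)
    (hhead : ∃ j : Fin n, (j : ℕ) < i ∧ 0 < w j) {a b : ℝ} (ha : 0 < a) (hb : 0 ≤ b)
    (hba : b ≤ a) :
    weightedMean l w ≤ weightedMean l (fun j => (if (j : ℕ) < i then a else b) * w j) := by
  obtain ⟨j₀, hj₀, hw₀⟩ := hhead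
  refine weightedMean_le_weightedMean_of_ratio_monovary (fun j k hjk => ?_)
    (sum_pos' (fun j _ => hw j) ⟨j₀, mem_univ _, hw₀⟩)
    (sum_pos' (fun j _ => mul_nonneg (by split_ifs <;> positivity) (hw j))
      ⟨j₀, mem_univ _, by simpa [hj₀] using mul_pos ha hw₀⟩)
  have hkj : (k : ℕ) < j := hl.reflect_lt hjk
  have hab : (if (j : ℕ) < i then a else b) ≤ (if (k : ℕ) < i then a else b) := by
    split_ifs <;> first | exact le_rfl | exact hba | omega
  linarith [mul_le_mul_of_nonneg_right hab (mul_nonneg (hw j) (hw k))]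

theorem weightedMean_ite_mul_le_weightedMean_sq_mul (hl : Antitone l) (hw : ∀ j, 0 ≤ w j)
    (hhead : ∃ j : Fin n, (j : ℕ) < i ∧ 0 < w j) {φ : Fin n → ℝ} {F ν c : ℝ}
    (hF0 : F ≠ 0)
    (hφ : ∀ j k : Fin n, (j : ℕ) ≤ k → (k : ℕ) < i → |φ k| ≤ |φ j|)
    (hF : ∀ j : Fin n, (j : ℕ) < i → |F| ≤ |φ j|)
    (htail : ∀ j : Fin n, i ≤ (j : ℕ) → w j ≠ 0 → l j ≤ c ∧ |φ j| ≤ ν)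
    (hc : c ≤ weightedMean l (fun j => (if (j : ℕ) < i then F ^ 2 else ν ^ 2) * w j)) :
    weightedMean l (fun j => (if (j : ℕ) < i then F ^ 2 else ν ^ 2) * w j) ≤
      weightedMean l (fun j => φ j ^ 2 * w j) := by
  obtain ⟨j₀, hj₀, hw₀⟩ := hhead
  have hF2 : 0 < F ^ 2 := by positivity
  have hφF : ∀ j : Fin n, (j : ℕ) < i → F ^ 2 ≤ φ j ^ 2 := fun j hj =>
    sq_le_sq.mpr (hF j hj)
  have hpos₀ : 0 < F ^ 2 * w j₀ := mul_pos hF2 hw₀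
  calc _ ≤ weightedMean l (fun j => (if (j : ℕ) < i then F ^ 2 else φ j ^ 2) * w j) := by
        refine weightedMean_le_weightedMean_of_decrease_below (fun j => ?_) (fun j hj => ?_) hc
          (sum_pos' (fun j _ => mul_nonneg (by split_ifs <;> positivity) (hw j))
            ⟨j₀, mem_univ _, by simpa [hj₀] using hpos₀⟩)
        · split_ifs with hji
          · exact le_rfl
          rcases eq_or_ne (w j) 0 with h0 | h0
          · simp [h0]
          · exact mul_le_mul_of_nonneg_right
              (sq_le_sq.mpr ((htail j (not_lt.mp hji) h0).2.trans (le_abs_self ν))) (hw j)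
        · split_ifs at hj with hji
          · exact absurd hj (lt_irrefl _)
          · exact (htail j (not_lt.mp hji) fun h0 => by simp [h0] at hj).1
    _ ≤ _ := by
        refine weightedMean_le_weightedMean_of_ratio_monovary (fun j k hjk => ?_)
          (sum_pos' (fun j _ => mul_nonneg (by split_ifs <;> positivity) (hw j))
            ⟨j₀, mem_univ _, by simpa [hj₀] using hpos₀⟩)
          (sum_pos' (fun j _ => mul_nonneg (sq_nonneg _) (hw j))
            ⟨j₀, mem_univ _,
              hpos₀.trans_le (mul_le_mul_of_nonneg_right (hφF j₀ hj₀) (hw j₀))⟩)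
        have hkj : (k : ℕ) < j := hl.reflect_lt hjk
        have hcross : φ j ^ 2 * (if (k : ℕ) < i then F ^ 2 else φ k ^ 2) ≤
            φ k ^ 2 * (if (j : ℕ) < i then F ^ 2 else φ j ^ 2) := by
          split_ifs with hki hji hji
          · exact mul_le_mul_of_nonneg_right (sq_le_sq.mpr (hφ k j hkj.le hji)) hF2.le
          · rw [mul_comm]
            exact mul_le_mul_of_nonneg_right (hφF k hki) (sq_nonneg _)
          · omega
          · rw [mul_comm]
        linarith [mul_le_mul_of_nonneg_right hcross (mul_nonneg (hw j) (hw k))]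

end HeadTail

section RitzValue

variable {n : ℕ} (A : Matrix (Fin n) (Fin n) ℂ)

theorem abs_rayleigh_le (v : EuclideanSpace ℂ (Fin n)) :
    |rayleigh A v| ≤ ‖Matrix.toEuclideanCLM (n := Fin n) (𝕜 := ℂ) A‖ := by
  rcases eq_or_ne v 0 with rfl | hv
  · simp [rayleigh]
  have hv2 : 0 < ‖v‖ ^ 2 := by positivity
  rw [rayleigh, abs_div, abs_of_pos hv2, div_le_iff₀ hv2]
  calc |(inner ℂ v (Matrix.toEuclideanLin A v)).re|
      ≤ ‖inner ℂ v (Matrix.toEuclideanLin A v)‖ := Complex.abs_re_le_norm _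
    _ ≤ ‖v‖ * ‖Matrix.toEuclideanCLM (n := Fin n) (𝕜 := ℂ) A v‖ := norm_inner_le_norm _ _
    _ ≤ ‖v‖ * (‖Matrix.toEuclideanCLM (n := Fin n) (𝕜 := ℂ) A‖ * ‖v‖) := by
      gcongr; exact ContinuousLinearMap.le_opNorm _ _
    _ = _ := by ring

variable {A}

theorem ritzValue_le_rayleigh {S : Submodule ℂ (EuclideanSpace ℂ (Fin n))} {k : ℕ}
    (hS : Module.finrank ℂ S = k) {v : EuclideanSpace ℂ (Fin n)} (hv : v ∈ S) (hv0 : v ≠ 0) :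
    ritzValue A S k ≤ rayleigh A v := by
  refine csSup_le ⟨_, S, le_rfl, hS, fun u _ _ => (abs_le.mp (abs_rayleigh_le A u)).1⟩ ?_
  rintro r ⟨T, hTS, hT, hr⟩
  exact hr v (Submodule.eq_of_le_of_finrank_eq hTS (hT.trans hS.symm) ▸ hv) hv0

theorem ritzValue_le_ritzValue {S T : Submodule ℂ (EuclideanSpace ℂ (Fin n))} {k m : ℕ}
    (hTS : T ≤ S) (hS : Module.finrank ℂ S = k) (hT : Module.finrank ℂ T = m) (hm : m ≠ 0) :
    ritzValue A S k ≤ ritzValue A T m := by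
  refine csSup_le_csSup ⟨‖Matrix.toEuclideanCLM (n := Fin n) (𝕜 := ℂ) A‖, ?_⟩
    ⟨_, S, le_rfl, hS, fun u _ _ => (abs_le.mp (abs_rayleigh_le A u)).1⟩ ?_
  · rintro r ⟨R, -, hR, hr⟩
    obtain ⟨v, hv, hv0⟩ := Submodule.exists_mem_ne_zero_of_ne_bot
      (p := R) (fun h => hm (by rw [← hR, h, finrank_bot]))
    exact (hr v hv hv0).trans (abs_le.mp (abs_rayleigh_le A v)).2
  · rintro r ⟨R, hRS, hR, hr⟩
    have hRS' : R = S := Submodule.eq_of_le_of_finrank_eq hRS (hR.trans hS.symm)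
    exact ⟨T, le_rfl, hT, fun v hv hv0 => hr v (hRS' ▸ hTS hv) hv0⟩

end RitzValue

section Eigenbasis

variable {n : ℕ} {A : Matrix (Fin n) (Fin n) ℂ} {lam : Fin n → ℝ}
  {x : Fin n → EuclideanSpace ℂ (Fin n)}

theorem Orthonormal.exists_orthonormalBasis_coe_eq (hx : Orthonormal ℂ x) :
    ∃ b : OrthonormalBasis (Fin n) ℂ (EuclideanSpace ℂ (Fin n)), ⇑b = x :=
  ⟨OrthonormalBasis.mk hx (hx.linearIndependent.span_eq_top_of_card_eq_finrank' (by simp)).ge,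
    OrthonormalBasis.coe_mk _ _⟩

theorem Orthonormal.sum_sq_norm_inner_right_eq (hx : Orthonormal ℂ x)
    (v : EuclideanSpace ℂ (Fin n)) : ∑ j, ‖(inner ℂ (x j) v : ℂ)‖ ^ 2 = ‖v‖ ^ 2 := by
  obtain ⟨b, rfl⟩ := hx.exists_orthonormalBasis_coe_eq
  exact b.sum_sq_norm_inner_right v

theorem inner_eigenvector_toEuclideanLin (hA : A.IsHermitian)
    (heig : ∀ j, Matrix.toEuclideanLin A (x j) = (lam j : ℂ) • x j) (j : Fin n)
    (v : EuclideanSpace ℂ (Fin n)) :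
    inner ℂ (x j) (Matrix.toEuclideanLin A v) = (lam j : ℂ) * inner ℂ (x j) v := by
  rw [← Matrix.isSymmetric_toEuclideanLin_iff.mpr hA, heig, inner_smul_left, Complex.conj_ofReal]

theorem rayleigh_eq_weightedMean (hA : A.IsHermitian) (hx : Orthonormal ℂ x)
    (heig : ∀ j, Matrix.toEuclideanLin A (x j) = (lam j : ℂ) • x j)
    (v : EuclideanSpace ℂ (Fin n)) :
    rayleigh A v = weightedMean lam (fun j => ‖(inner ℂ (x j) v : ℂ)‖ ^ 2) := by
  obtain ⟨b, rfl⟩ := hx.exists_orthonormalBasis_coe_eq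
  rw [rayleigh, weightedMean, ← b.sum_sq_norm_inner_right, ← b.sum_inner_mul_inner,
    Complex.re_sum]
  congr 1
  refine sum_congr rfl fun j _ => ?_
  rw [inner_eigenvector_toEuclideanLin hA heig, ← inner_conj_symm, mul_left_comm,
    Complex.conj_mul', ← Complex.ofReal_pow, ← Complex.ofReal_mul, Complex.ofReal_re]

theorem rayleigh_eq_weightedMean_of_inner_eq (hA : A.IsHermitian) (hx : Orthonormal ℂ x)
    (heig : ∀ j, Matrix.toEuclideanLin A (x j) = (lam j : ℂ) • x j)
    {u v : EuclideanSpace ℂ (Fin n)} (μ : Fin n → ℝ)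
    (h : ∀ j, inner ℂ (x j) u = (μ j : ℂ) * inner ℂ (x j) v) :
    rayleigh A u = weightedMean lam (fun j => μ j ^ 2 * ‖(inner ℂ (x j) v : ℂ)‖ ^ 2) := by
  simp only [rayleigh_eq_weightedMean hA hx heig u, h, norm_mul, mul_pow, Complex.norm_real,
    Real.norm_eq_abs, sq_abs]

theorem inner_matFun (hx : Orthonormal ℂ x) (f : ℝ → ℝ) (k : Fin n)
    (v : EuclideanSpace ℂ (Fin n)) :
    inner ℂ (x k) (matFun lam x f v) = (f (lam k) : ℂ) * inner ℂ (x k) v := by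
  simp only [matFun, LinearMap.sum_apply, LinearMap.smul_apply, LinearMap.smulRight_apply,
    ContinuousLinearMap.coe_coe, innerSL_apply_apply, smul_smul]
  exact hx.inner_right_fintype _ k

noncomputable def headPart (x : Fin n → EuclideanSpace ℂ (Fin n)) (i : ℕ)
    (v : EuclideanSpace ℂ (Fin n)) : EuclideanSpace ℂ (Fin n) :=
  ∑ j ∈ univ.filter (fun j : Fin n => (j : ℕ) < i), inner ℂ (x j) v • x j

theorem inner_headPart (hx : Orthonormal ℂ x) (i : ℕ) (v : EuclideanSpace ℂ (Fin n))
    (k : Fin n) :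
    inner ℂ (x k) (headPart x i v) = if (k : ℕ) < i then inner ℂ (x k) v else 0 := by
  simp [headPart, orthonormal_iff_ite.mp hx]

end Eigenbasis

section Dimension

variable {𝕜 E : Type*} [RCLike 𝕜] [NormedAddCommGroup E] [InnerProductSpace 𝕜 E]

theorem finrank_le_of_inf_orthogonal_eq_bot [FiniteDimensional 𝕜 E] {K S : Submodule 𝕜 E}
    (h : S ⊓ Kᗮ = ⊥) : Module.finrank 𝕜 S ≤ Module.finrank 𝕜 K := by
  have h1 := Submodule.finrank_add_finrank_le_of_disjoint (disjoint_iff.mpr h)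
  have h2 := K.finrank_add_finrank_orthogonal
  omega

theorem finrank_sub_le_finrank_orthogonal_inf [FiniteDimensional 𝕜 E] (K S : Submodule 𝕜 E) :
    Module.finrank 𝕜 S - Module.finrank 𝕜 K ≤ Module.finrank 𝕜 ↥(Kᗮ ⊓ S) := by
  have h1 := Submodule.finrank_sup_add_finrank_inf_eq Kᗮ S
  have h2 := K.finrank_add_finrank_orthogonal
  have h3 := (Kᗮ ⊔ S).finrank_le
  omega

theorem finrank_span_image_le {n a b : ℕ} (x : Fin n → E) {s : Set (Fin n)}
    (hs : ∀ j ∈ s, a ≤ (j : ℕ) ∧ (j : ℕ) < b) :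
    Module.finrank 𝕜 (Submodule.span 𝕜 (x '' s)) ≤ b - a := by
  classical
  rw [Set.image_eq_range]
  refine (finrank_range_le_card _).trans ?_
  simpa using Fintype.card_le_of_injective
    (fun j : s => (⟨j.1, Finset.mem_Ico.mpr (hs j.1 j.2)⟩ : Finset.Ico a b))
    (fun j k h => Subtype.ext (Fin.ext (congrArg Subtype.val h)))

theorem inner_eq_zero_of_mem_orthogonal_span_image {ι : Type*} (x : ι → E) {s : Set ι} {v : E}
    (hv : v ∈ (Submodule.span 𝕜 (x '' s))ᗮ) {j : ι} (hj : j ∈ s) : inner 𝕜 (x j) v = 0 :=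
  Submodule.inner_right_of_mem_orthogonal (Submodule.subset_span (Set.mem_image_of_mem x hj)) hv

end Dimension

section RitzSubspace

variable {n p i : ℕ} {A : Matrix (Fin n) (Fin n) ℂ} {lam : Fin n → ℝ}
  {x : Fin n → EuclideanSpace ℂ (Fin n)} {Y : Submodule ℂ (EuclideanSpace ℂ (Fin n))}

theorem exists_inner_ne_zero_of_lt_ritzValue (hpn : p < n) (hA : A.IsHermitian)
    (hlam : Antitone lam) (hx : Orthonormal ℂ x)
    (heig : ∀ j, Matrix.toEuclideanLin A (x j) = (lam j : ℂ) • x j)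
    (hY : Module.finrank ℂ Y = p) (hηp : lam ⟨p, hpn⟩ < ritzValue A Y p)
    {v : EuclideanSpace ℂ (Fin n)} (hv : v ∈ Y) (hv0 : v ≠ 0) :
    ∃ j : Fin n, (j : ℕ) < p ∧ inner ℂ (x j) v ≠ 0 := by
  by_contra! h
  have hle : rayleigh A v ≤ lam ⟨p, hpn⟩ := by
    rw [rayleigh_eq_weightedMean hA hx heig]
    refine weightedMean_le_of_forall_le (fun j => by positivity) ?_ fun j hj => hlam ?_
    · rw [hx.sum_sq_norm_inner_right_eq]
      positivity
    · by_contra! hjp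
      exact hj (by simp [h j hjp])
  linarith [ritzValue_le_rayleigh (A := A) hY hv hv0]

theorem exists_inner_ne_zero_of_mem_orthogonal_inf (hpn : p < n) (hA : A.IsHermitian)
    (hlam : Antitone lam) (hx : Orthonormal ℂ x)
    (heig : ∀ j, Matrix.toEuclideanLin A (x j) = (lam j : ℂ) • x j)
    (hY : Module.finrank ℂ Y = p) (hηp : lam ⟨p, hpn⟩ < ritzValue A Y p)
    {v : EuclideanSpace ℂ (Fin n)}
    (hv : v ∈ (Submodule.span ℂ (x '' {j | i ≤ (j : ℕ) ∧ (j : ℕ) < p}))ᗮ ⊓ Y) (hv0 : v ≠ 0) :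
    ∃ j : Fin n, (j : ℕ) < i ∧ inner ℂ (x j) v ≠ 0 := by
  obtain ⟨j, hjp, hj⟩ :=
    exists_inner_ne_zero_of_lt_ritzValue hpn hA hlam hx heig hY hηp hv.2 hv0
  refine ⟨j, ?_, hj⟩
  by_contra! hij
  exact hj (inner_eq_zero_of_mem_orthogonal_span_image x hv.1 ⟨hij, hjp⟩)

theorem finrank_orthogonal_inf_eq (hpn : p < n) (hA : A.IsHermitian)
    (hlam : Antitone lam) (hx : Orthonormal ℂ x)
    (heig : ∀ j, Matrix.toEuclideanLin A (x j) = (lam j : ℂ) • x j)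
    (hY : Module.finrank ℂ Y = p) (hηp : lam ⟨p, hpn⟩ < ritzValue A Y p) (hip : i ≤ p) :
    Module.finrank ℂ ↥((Submodule.span ℂ (x '' {j | i ≤ (j : ℕ) ∧ (j : ℕ) < p}))ᗮ ⊓ Y) = i := by
  apply le_antisymm
  · have hH := finrank_span_image_le (𝕜 := ℂ) (a := 0) x (s := {j : Fin n | (j : ℕ) < i})
      fun j hj => ⟨Nat.zero_le _, hj⟩
    refine (finrank_le_of_inf_orthogonal_eq_bot ?_).trans (by simpa using hH)
    rw [Submodule.eq_bot_iff]
    rintro v ⟨hv, hvH⟩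
    by_contra hv0
    obtain ⟨j, hj, hne⟩ :=
      exists_inner_ne_zero_of_mem_orthogonal_inf hpn hA hlam hx heig hY hηp hv hv0
    exact hne (inner_eq_zero_of_mem_orthogonal_span_image x hvH hj)
  · have hK := finrank_span_image_le (𝕜 := ℂ) x (s := {j : Fin n | i ≤ (j : ℕ) ∧ (j : ℕ) < p})
      fun j hj => hj
    have := finrank_sub_le_finrank_orthogonal_inf
      (Submodule.span ℂ (x '' {j : Fin n | i ≤ (j : ℕ) ∧ (j : ℕ) < p})) Y
    omega

end RitzSubspace

section Reweighting

variable {n : ℕ} {A : Matrix (Fin n) (Fin n) ℂ} {lam : Fin n → ℝ}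
  {x : Fin n → EuclideanSpace ℂ (Fin n)}

theorem rayleigh_smul_headPart_add_smul_sub (hA : A.IsHermitian) (hx : Orthonormal ℂ x)
    (heig : ∀ j, Matrix.toEuclideanLin A (x j) = (lam j : ℂ) • x j) (i : ℕ)
    (v : EuclideanSpace ℂ (Fin n)) (α β : ℝ) :
    rayleigh A ((α : ℂ) • headPart x i v + (β : ℂ) • (v - headPart x i v)) =
      weightedMean lam
        (fun j => (if (j : ℕ) < i then α ^ 2 else β ^ 2) * ‖(inner ℂ (x j) v : ℂ)‖ ^ 2) := by
  refine (rayleigh_eq_weightedMean_of_inner_eq hA hx heig (v := v)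
    (fun j => if (j : ℕ) < i then α else β) fun k => ?_).trans (by simp only [ite_pow])
  rw [inner_add_right, inner_smul_right, inner_smul_right, inner_sub_right, inner_headPart hx]
  split_ifs <;> simp

theorem rayleigh_ratio_eq (hA : A.IsHermitian) (hx : Orthonormal ℂ x)
    (heig : ∀ j, Matrix.toEuclideanLin A (x j) = (lam j : ℂ) • x j) {i : ℕ}
    {v vh vo : EuclideanSpace ℂ (Fin n)}
    (hhead : ∃ j : Fin n, (j : ℕ) < i ∧ inner ℂ (x j) v ≠ 0) {F ν : ℝ} (hF : F ≠ 0)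
    (hvh : vh = headPart x i v) (hvo : vo = (F : ℂ) • vh + (ν : ℂ) • (v - vh)) :
    (rayleigh A vh - rayleigh A vo) / (rayleigh A vo - rayleigh A (v - vh)) =
      ν ^ 2 / F ^ 2 * ((rayleigh A vh - rayleigh A v) / (rayleigh A v - rayleigh A (v - vh))) := by
  subst hvh hvo
  have e := rayleigh_smul_headPart_add_smul_sub hA hx heig i v
  have e10 := e 1 0
  have e01 := e 0 1
  simp only [Complex.ofReal_one, Complex.ofReal_zero, one_smul, zero_smul, add_zero, zero_add,
    one_pow, ne_eq, OfNat.ofNat_ne_zero, not_false_eq_true, zero_pow] at e10 e01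
  rw [e10, e01, e F ν, rayleigh_eq_weightedMean hA hx heig]
  obtain ⟨j₀, hj₀, hv₀⟩ := hhead
  exact weightedMean_ite_ratio_eq _ lam (fun j => by positivity) ⟨j₀, hj₀, by positivity⟩
    (by positivity) (by positivity)

theorem rayleigh_le_rayleigh_le_rayleigh_matFun (hA : A.IsHermitian) (hlam : Antitone lam)
    (hx : Orthonormal ℂ x) (heig : ∀ j, Matrix.toEuclideanLin A (x j) = (lam j : ℂ) • x j)
    {i p : ℕ} (hpn : p < n) {v vh vo : EuclideanSpace ℂ (Fin n)}
    (hhead : ∃ j : Fin n, (j : ℕ) < i ∧ inner ℂ (x j) v ≠ 0)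
    (hgap : ∀ j : Fin n, i ≤ (j : ℕ) → (j : ℕ) < p → inner ℂ (x j) v = 0)
    (hc : lam ⟨p, hpn⟩ ≤ rayleigh A v) (f : ℝ → ℝ) {F ν : ℝ}
    (hmono : ∀ j k : Fin n, (j : ℕ) ≤ (k : ℕ) → (k : ℕ) < i → |f (lam k)| ≤ |f (lam j)|)
    (hF : ∀ j : Fin n, (j : ℕ) < i → |F| ≤ |f (lam j)|)
    (hν : ∀ j : Fin n, p ≤ (j : ℕ) → |f (lam j)| ≤ ν) (hνF : ν < |F|)
    (hvh : vh = headPart x i v) (hvo : vo = (F : ℂ) • vh + (ν : ℂ) • (v - vh)) :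
    rayleigh A v ≤ rayleigh A vo ∧ rayleigh A vo ≤ rayleigh A (matFun lam x f v) := by
  subst hvh hvo
  have hν0 : 0 ≤ ν := (abs_nonneg _).trans (hν ⟨p, hpn⟩ le_rfl)
  have hF0 : F ≠ 0 := abs_pos.mp (hν0.trans_lt hνF)
  obtain ⟨j₀, hj₀, hv₀⟩ := hhead
  have hhead' : ∃ j : Fin n, (j : ℕ) < i ∧ 0 < ‖(inner ℂ (x j) v : ℂ)‖ ^ 2 :=
    ⟨j₀, hj₀, by positivity⟩
  have htail : ∀ j : Fin n, i ≤ (j : ℕ) → ‖(inner ℂ (x j) v : ℂ)‖ ^ 2 ≠ 0 →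
      lam j ≤ lam ⟨p, hpn⟩ ∧ |f (lam j)| ≤ ν := fun j hij hj => by
    have hpj : p ≤ (j : ℕ) := by
      by_contra! hjp
      exact hj (by simp [hgap j hij hjp])
    exact ⟨hlam (Fin.mk_le_of_le_val hpj), hν j hpj⟩
  rw [rayleigh_smul_headPart_add_smul_sub hA hx heig,
    rayleigh_eq_weightedMean_of_inner_eq hA hx heig _ fun k => inner_matFun hx f k v]
  rw [rayleigh_eq_weightedMean hA hx heig] at hc ⊢
  have h₁ := weightedMean_le_weightedMean_ite_mul hlam (fun j => by positivity) hhead'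
    (by positivity : 0 < F ^ 2) (sq_nonneg ν)
    (sq_le_sq.mpr (by rw [abs_of_nonneg hν0]; exact hνF.le))
  exact ⟨h₁, weightedMean_ite_mul_le_weightedMean_sq_mul hlam (fun j => by positivity) hhead' hF0
    hmono hF htail (hc.trans h₁)⟩

end Reweighting

/-- For `𝒴̃ = span{x_{i+1},…,x_p}^⊥ ∩ 𝒴` (with `η_p > λ_{p+1}`),
`|f(λ₁)| ≥ ⋯ ≥ |f(λ_i)| > ν_p`, and a Ritz vector `ỹ' = f(A)ỹ` associated with the
smallest Ritz value `η̃'_i` of `A` in `𝒴̃' = f(A)𝒴̃` with `λ_i > η̃'_i`, the vector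
`ỹ° = f(λ_i)ỹ_i + ν_p(ỹ − ỹ_i)` satisfies
`λ_i > η̃'_i = ρ(ỹ') ≥ ρ(ỹ°) ≥ ρ(ỹ) ≥ η̃_i > λ_{p+1}` and
`(ρ(ỹ_i) − ρ(ỹ°))/(ρ(ỹ°) − ρ(ỹ−ỹ_i)) = (ν_p²/|f(λ_i)|²)·(ρ(ỹ_i) − ρ(ỹ))/(ρ(ỹ) − ρ(ỹ−ỹ_i))`.
(0-indexed: `lam ⟨j⟩` is `λ_{j+1}`.) -/
theorem stmt9 {n p i : ℕ} (hi : 1 ≤ i) (hip : i ≤ p) (hpn : p < n)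
    (A : Matrix (Fin n) (Fin n) ℂ) (hA : A.IsHermitian)
    (lam : Fin n → ℝ) (hlam : Antitone lam)
    (x : Fin n → EuclideanSpace ℂ (Fin n)) (hx : Orthonormal ℂ x)
    (heig : ∀ j, Matrix.toEuclideanLin A (x j) = (lam j : ℂ) • x j)
    (Y : Submodule ℂ (EuclideanSpace ℂ (Fin n))) (hY : Module.finrank ℂ Y = p)
    (hηp : lam ⟨p, hpn⟩ < ritzValue A Y p)
    (Yt : Submodule ℂ (EuclideanSpace ℂ (Fin n)))
    (hYt : Yt = (Submodule.span ℂ (x '' {j | i ≤ (j : ℕ) ∧ (j : ℕ) < p}))ᗮ ⊓ Y)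
    (f : ℝ → ℝ) (νp : ℝ)
    (hνp : IsGreatest ((fun j => |f (lam j)|) '' {j : Fin n | p ≤ (j : ℕ)}) νp)
    (hmono : ∀ j k : Fin n, (j : ℕ) ≤ (k : ℕ) → (k : ℕ) < i →
      |f (lam k)| ≤ |f (lam j)|)
    (hgt : νp < |f (lam ⟨i - 1, by omega⟩)|)
    (yt : EuclideanSpace ℂ (Fin n)) (hytY : yt ∈ Yt) (hyt0 : yt ≠ 0)
    (hRitz : IsRitzVector A (Yt.map (matFun lam x f))
      (ritzValue A (Yt.map (matFun lam x f)) i) (matFun lam x f yt))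
    (hlt : ritzValue A (Yt.map (matFun lam x f)) i < lam ⟨i - 1, by omega⟩)
    (yti yto : EuclideanSpace ℂ (Fin n))
    (hyti : yti = ∑ j ∈ Finset.univ.filter (fun j : Fin n => (j : ℕ) < i),
      (inner ℂ (x j) yt : ℂ) • x j)
    (hyto : yto = (f (lam ⟨i - 1, by omega⟩) : ℂ) • yti + (νp : ℂ) • (yt - yti)) :
    (ritzValue A (Yt.map (matFun lam x f)) i < lam ⟨i - 1, by omega⟩ ∧
      ritzValue A (Yt.map (matFun lam x f)) i = rayleigh A (matFun lam x f yt) ∧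
      rayleigh A yto ≤ rayleigh A (matFun lam x f yt) ∧
      rayleigh A yt ≤ rayleigh A yto ∧
      ritzValue A Yt i ≤ rayleigh A yt ∧
      lam ⟨p, hpn⟩ < ritzValue A Yt i) ∧
    (rayleigh A yti - rayleigh A yto) / (rayleigh A yto - rayleigh A (yt - yti)) =
      νp ^ 2 / |f (lam ⟨i - 1, by omega⟩)| ^ 2 *
        ((rayleigh A yti - rayleigh A yt) /
          (rayleigh A yt - rayleigh A (yt - yti))) := by
  subst hYt
  have hdim := finrank_orthogonal_inf_eq hpn hA hlam hx heig hY hηp hip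
  have hρ : ritzValue A _ i ≤ rayleigh A yt := ritzValue_le_rayleigh hdim hytY hyt0
  have hη : lam ⟨p, hpn⟩ < ritzValue A _ i :=
    hηp.trans_le (ritzValue_le_ritzValue inf_le_right hY hdim (by omega))
  have hhead := exists_inner_ne_zero_of_mem_orthogonal_inf hpn hA hlam hx heig hY hηp hytY hyt0
  have hgap : ∀ j : Fin n, i ≤ (j : ℕ) → (j : ℕ) < p → inner ℂ (x j) yt = 0 :=
    fun j hij hjp => inner_eq_zero_of_mem_orthogonal_span_image x hytY.1 ⟨hij, hjp⟩
  have hF : ∀ j : Fin n, (j : ℕ) < i → |f (lam ⟨i - 1, by omega⟩)| ≤ |f (lam j)| :=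
    fun j hj => hmono j _ (Nat.le_sub_one_of_lt hj) (Nat.sub_lt hi one_pos)
  have hν : ∀ j : Fin n, p ≤ (j : ℕ) → |f (lam j)| ≤ νp := fun j hj => hνp.2 ⟨j, hj, rfl⟩
  obtain ⟨h₁, h₂⟩ := rayleigh_le_rayleigh_le_rayleigh_matFun hA hlam hx heig hpn hhead hgap
    (hη.trans_le hρ).le f hmono hF hν hgt hyti hyto
  refine ⟨⟨hlt, hRitz.2.2.1.symm, h₂, h₁, hρ, hη⟩, ?_⟩
  have hF0 : f (lam ⟨i - 1, by omega⟩) ≠ 0 :=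
    abs_pos.mp (((abs_nonneg _).trans (hν ⟨p, hpn⟩ le_rfl)).trans_lt hgt)
  rw [sq_abs]
  exact rayleigh_ratio_eq hA hx heig hhead hF0 hyti hyto
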